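/- For any DAG G in which i₂* ∉ P(i₁*), writing the 2-influential set as {i_1, …, i_m} in decreasing rank order with i_1 = i₁* and i_2 = i₂* and m ≥ 3, either (i_3 ∈ P(i_1) and i_{t+1} ∈ P(i_t) for all 3 ≤ t < m) or (i_3 ∈ P(i_2) and i_{t+1} ∈ P(i_t) for all 3 ≤ t < m). -/

import Mathlib

attribute [local instance] Classical.propDecidable

/-- The progeny of node `i`: all nodes with a directed path to `i`, including `i`. -/
noncomputable def progeny {n : ℕ} (E : Finset (Fin n × Fin n)) (i : Fin n) : Finset (Fin n) :=
  Finset.univ.filter (fun j => Relation.ReflTransGen (fun u v => (u, v) ∈ E) j i)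

/-- The graph is acyclic. -/
def Acyclic {n : ℕ} (E : Finset (Fin n × Fin n)) : Prop :=
  ∀ i : Fin n, ¬ Relation.TransGen (fun u v => (u, v) ∈ E) i i

/-- `Prec E i j` means `i ≻ j` : larger progeny, ties broken by larger index. -/
def Prec {n : ℕ} (E : Finset (Fin n × Fin n)) (i j : Fin n) : Prop :=
  (progeny E j).card < (progeny E i).card ∨
    ((progeny E j).card = (progeny E i).card ∧ j < i)

/-- Delete all out-edges of node `i`. -/
noncomputable def delOut {n : ℕ} (E : Finset (Fin n × Fin n)) (i : Fin n) :
    Finset (Fin n × Fin n) := E.filter (fun e => e.1 ≠ i)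

/-- `i` is in the `k`-influential set: fewer than `k` nodes outrank `i`
after `i` deletes all her out-edges. -/
noncomputable def Influential {n : ℕ} (k : ℕ) (E : Finset (Fin n × Fin n)) (i : Fin n) : Prop :=
  (Finset.univ.filter (fun j => Prec (delOut E i) j i)).card < k

/-!
A 2-influential node `i` is outranked by at most one node once its out-edges are deleted.
Deleting them changes neither the progeny of `i` (acyclicity) nor that of any `j` with
`i ∉ P(j)`. So if two nodes outrank `i`, then `i` lies in the progeny of one of them; and if
`j ≻ i` lies in the progeny of some `w ≻ i`, then `i ∈ P(j)`, since otherwise `j` and `w`,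
whose progeny still contains `P(j)`, would both outrank `i` after the deletion. Along the ranked
influential set, the first fact puts `i₃` below `i₁` or `i₂`, and the second then chains each
`i_{t+1}` below `i_t`.
-/

section Progeny

variable {n : ℕ} {E : Finset (Fin n × Fin n)} {i j u w : Fin n}

lemma mem_progeny :
    j ∈ progeny E i ↔ Relation.ReflTransGen (fun u v => (u, v) ∈ E) j i := by
  simp [progeny]

lemma self_mem_progeny (E : Finset (Fin n × Fin n)) (i : Fin n) : i ∈ progeny E i :=
  mem_progeny.2 .refl

lemma progeny_subset_of_mem (h : j ∈ progeny E i) : progeny E j ⊆ progeny E i :=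
  fun _ hk => mem_progeny.2 ((mem_progeny.1 hk).trans (mem_progeny.1 h))

lemma eq_of_mem_progeny_of_mem_progeny (hE : Acyclic E) (hij : i ∈ progeny E j)
    (hji : j ∈ progeny E i) : i = j := by
  rcases Relation.reflTransGen_iff_eq_or_transGen.1 (mem_progeny.1 hij) with h | h
  · exact h.symm
  · exact absurd (h.trans_left (mem_progeny.1 hji)) (hE i)

lemma progeny_delOut_subset (i j : Fin n) : progeny (delOut E i) j ⊆ progeny E j :=
  fun _ hk => mem_progeny.2 <|
    Relation.ReflTransGen.mono (fun _ _ h => (Finset.mem_filter.1 h).1) _ _ (mem_progeny.1 hk)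

lemma reflTransGen_delOut
    (h : Relation.ReflTransGen (fun a b => (a, b) ∈ E) u w)
    (hne : ∀ v, Relation.ReflTransGen (fun a b => (a, b) ∈ E) u v →
      Relation.TransGen (fun a b => (a, b) ∈ E) v w → v ≠ i) :
    Relation.ReflTransGen (fun a b => (a, b) ∈ delOut E i) u w := by
  induction h using Relation.ReflTransGen.head_induction_on with
  | refl => exact .refl
  | head hab hbw ih =>
    exact .head (Finset.mem_filter.2 ⟨hab, hne _ .refl (.head' hab hbw)⟩)
      (ih fun v hbv hvw => hne v (.head hab hbv) hvw)

lemma progeny_delOut_self (hE : Acyclic E) : progeny (delOut E i) i = progeny E i := by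
  refine (progeny_delOut_subset i i).antisymm fun k hk => mem_progeny.2 ?_
  exact reflTransGen_delOut (mem_progeny.1 hk) fun v _ hvi hv => hE i (hv ▸ hvi)

lemma progeny_delOut_of_notMem (h : i ∉ progeny E j) : progeny (delOut E i) j = progeny E j := by
  refine (progeny_delOut_subset i j).antisymm fun k hk => mem_progeny.2 ?_
  exact reflTransGen_delOut (mem_progeny.1 hk) fun v _ hvj hv =>
    h (mem_progeny.2 (hv ▸ hvj.to_reflTransGen))

lemma mem_progeny_delOut_of_notMem (hjw : j ∈ progeny E w) (hji : j ∉ progeny E i) :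
    j ∈ progeny (delOut E i) w :=
  mem_progeny.2 <| reflTransGen_delOut (mem_progeny.1 hjw) fun _ hjv _ hv =>
    hji (mem_progeny.2 (hv ▸ hjv))

end Progeny

section Rank

variable {n : ℕ} {E : Finset (Fin n × Fin n)} {i j w : Fin n}

lemma prec_irrefl (E : Finset (Fin n × Fin n)) (i : Fin n) : ¬ Prec E i i := by
  rintro (h | ⟨_, h⟩) <;> exact lt_irrefl _ h

lemma Prec.card_progeny_le (h : Prec E j i) : (progeny E i).card ≤ (progeny E j).card := by
  rcases h with h | h <;> omega

lemma notMem_progeny_of_prec (hE : Acyclic E) (h : Prec E j i) : j ∉ progeny E i := by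
  intro hji
  have hsub := progeny_subset_of_mem hji
  have heq : progeny E j = progeny E i := Finset.eq_of_subset_of_card_le hsub h.card_progeny_le
  have hij : i ∈ progeny E j := heq ▸ self_mem_progeny E i
  exact prec_irrefl E i (eq_of_mem_progeny_of_mem_progeny hE hij hji ▸ h)

lemma prec_delOut_of_notMem_progeny (hE : Acyclic E) (hij : i ∉ progeny E j) (h : Prec E j i) :
    Prec (delOut E i) j i := by
  rwa [Prec, progeny_delOut_of_notMem hij, progeny_delOut_self hE]

lemma prec_delOut_of_mem_progeny (hE : Acyclic E) (hj : Prec E j i) (hw : Prec E w i)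
    (hjw : j ∈ progeny E w) (hij : i ∉ progeny E j) : Prec (delOut E i) w i := by
  have hsub : progeny E j ⊆ progeny (delOut E i) w := by
    rw [← progeny_delOut_of_notMem hij]
    exact progeny_subset_of_mem (mem_progeny_delOut_of_notMem hjw (notMem_progeny_of_prec hE hj))
  rw [Prec, progeny_delOut_self hE]
  rcases (Finset.card_le_card hsub).lt_or_eq with hlt | hcard
  · exact Or.inl (hj.card_progeny_le.trans_lt hlt)
  · -- `P(j)` is all of `w`'s surviving progeny, so it contains `w` and hence all of `P(w)`
    have heq := Finset.eq_of_subset_of_card_le hsub hcard.ge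
    have hwj : w ∈ progeny E j := heq ▸ self_mem_progeny (delOut E i) w
    have hw' : progeny (delOut E i) w = progeny E w :=
      (progeny_delOut_subset i w).antisymm (heq ▸ progeny_subset_of_mem hwj)
    rwa [hw']

end Rank

section Influential

variable {n : ℕ} {E : Finset (Fin n × Fin n)} {i j w a b : Fin n}

lemma Influential.eq_of_prec_delOut (hi : Influential 2 E i) (ha : Prec (delOut E i) a i)
    (hb : Prec (delOut E i) b i) : a = b := by
  by_contra hab
  have hcard : 1 < (Finset.univ.filter fun j => Prec (delOut E i) j i).card :=
    Finset.one_lt_card.2 ⟨a, by simpa using ha, b, by simpa using hb, hab⟩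
  exact hcard.not_ge (Nat.le_of_lt_succ hi)

lemma Influential.mem_progeny_or_mem_progeny (hE : Acyclic E) (hi : Influential 2 E i)
    (ha : Prec E a i) (hb : Prec E b i) (hab : a ≠ b) :
    i ∈ progeny E a ∨ i ∈ progeny E b := by
  by_contra! h
  exact hab (hi.eq_of_prec_delOut (prec_delOut_of_notMem_progeny hE h.1 ha)
    (prec_delOut_of_notMem_progeny hE h.2 hb))

lemma Influential.mem_progeny_of_mem_progeny (hE : Acyclic E) (hi : Influential 2 E i)
    (hj : Prec E j i) (hw : Prec E w i) (hjw : j ∈ progeny E w) (hne : j ≠ w) :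
    i ∈ progeny E j := by
  by_contra hij
  exact hne (hi.eq_of_prec_delOut (prec_delOut_of_notMem_progeny hE hij hj)
    (prec_delOut_of_mem_progeny hE hj hw hjw hij))

end Influential

/-- if i₂* ∉ P(i₁*) and the 2-influential set ordered decreasingly is
i₁ = i₁*, i₂ = i₂*, i₃, …, i_m with m ≥ 3, then either i₃ ∈ P(i₁) or i₃ ∈ P(i₂), and in
either case i_{t+1} ∈ P(i_t) for all 3 ≤ t < m. -/
theorem stmt11 {n m : ℕ} (E : Finset (Fin n × Fin n)) (hE : Acyclic E)
    (i1 i2 : Fin n)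
    (hm : 3 ≤ m) (f : Fin m → Fin n)
    (henum : ∀ i : Fin n, Influential 2 E i ↔ ∃ t : Fin m, f t = i)
    (hord : ∀ t s : Fin m, t < s → Prec E (f t) (f s))
    (hf0 : f ⟨0, by omega⟩ = i1) (hf1 : f ⟨1, by omega⟩ = i2) :
    (f ⟨2, by omega⟩ ∈ progeny E i1 ∧
      ∀ t : Fin m, 2 ≤ (t : ℕ) → ∀ h : (t : ℕ) + 1 < m,
        f ⟨(t : ℕ) + 1, h⟩ ∈ progeny E (f t)) ∨
    (f ⟨2, by omega⟩ ∈ progeny E i2 ∧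
      ∀ t : Fin m, 2 ≤ (t : ℕ) → ∀ h : (t : ℕ) + 1 < m,
        f ⟨(t : ℕ) + 1, h⟩ ∈ progeny E (f t)) := by
  subst hf0 hf1
  have hinf (t : Fin m) : Influential 2 E (f t) := (henum _).2 ⟨t, rfl⟩
  have hne {t s : Fin m} (hts : t < s) : f t ≠ f s :=
    fun h => prec_irrefl E _ (h ▸ hord t s hts)
  have h0 {t : Fin m} (ht : 2 ≤ (t : ℕ)) : ⟨0, by omega⟩ < t :=
    Fin.mk_lt_of_lt_val (by omega)
  have h1 {t : Fin m} (ht : 2 ≤ (t : ℕ)) : ⟨1, by omega⟩ < t :=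
    Fin.mk_lt_of_lt_val (by omega)
  have hbelow (t : Fin m) (ht : 2 ≤ (t : ℕ)) :
      f t ∈ progeny E (f ⟨0, by omega⟩) ∨ f t ∈ progeny E (f ⟨1, by omega⟩) :=
    (hinf t).mem_progeny_or_mem_progeny hE (hord _ t (h0 ht)) (hord _ t (h1 ht))
      (hne (Fin.mk_lt_mk.2 one_pos))
  have hchain (t : Fin m) (ht : 2 ≤ (t : ℕ)) (h : (t : ℕ) + 1 < m) :
      f ⟨(t : ℕ) + 1, h⟩ ∈ progeny E (f t) := by
    have hts : t < ⟨(t : ℕ) + 1, h⟩ := Fin.lt_def.2 (Nat.lt_succ_self _)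
    rcases hbelow t ht with hw | hw
    · exact (hinf _).mem_progeny_of_mem_progeny hE (hord _ _ hts)
        (hord _ _ ((h0 ht).trans hts)) hw (hne (h0 ht)).symm
    · exact (hinf _).mem_progeny_of_mem_progeny hE (hord _ _ hts)
        (hord _ _ ((h1 ht).trans hts)) hw (hne (h1 ht)).symm
  exact (hbelow _ le_rfl).imp (⟨·, hchain⟩) (⟨·, hchain⟩)
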